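/- Let g(z) := min{ψ(t)z + 2c_W(t) : 0 ≤ t ≤ 1}. Then g(z) ≤ z for all z ∈ [0,∞), and lim_{z→0⁺} g(z)/z = 1. -/

import Mathlib

open MeasureTheory Metric Filter Set Topology
open scoped ENNReal NNReal RealInnerProductSpace

noncomputable section

/-- `n`-dimensional Euclidean space. -/
abbrev Euc (n : ℕ) := EuclideanSpace ℝ (Fin n)

variable {n : ℕ}

/-- The set `A` has Lebesgue density `0` at the point `x`. -/
def DensityZeroAt (A : Set (Euc n)) (x : Euc n) : Prop :=
  Tendsto (fun r : ℝ => volume (A ∩ ball x r) / volume (ball x r)) (𝓝[>] 0) (𝓝 0)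

/-- The set `A` has Lebesgue density `1` at the point `x`. -/
def DensityOneAt (A : Set (Euc n)) (x : Euc n) : Prop :=
  Tendsto (fun r : ℝ => volume (A ∩ ball x r) / volume (ball x r)) (𝓝[>] 0) (𝓝 1)

/-- The essential (measure-theoretic) boundary of `A`; for a set of finite perimeter it
agrees with the reduced boundary `∂*A` up to an `H^{n-1}`-negligible set (Federer). -/
def essBoundary (A : Set (Euc n)) : Set (Euc n) :=
  {x | ¬ DensityOneAt A x ∧ ¬ DensityZeroAt A x}

section Vec

variable {F : Type*} [NormedAddCommGroup F] [InnerProductSpace ℝ F]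

/-- `x` is an approximate jump point of `u`, with one-sided approximate limits `a, b`
and normal direction `ν`. -/
def ApproxJumpAt (u : Euc n → F) (x : Euc n) (a b : F) (ν : Euc n) : Prop :=
  ‖ν‖ = 1 ∧ a ≠ b ∧
  (∀ ε > 0, DensityZeroAt {y | 0 < ⟪y - x, ν⟫ ∧ ε ≤ ‖u y - a‖} x) ∧
  (∀ ε > 0, DensityZeroAt {y | ⟪y - x, ν⟫ < 0 ∧ ε ≤ ‖u y - b‖} x)

/-- The approximate jump set `S_u`. -/
def jumpSet (u : Euc n → F) : Set (Euc n) := {x | ∃ a b ν, ApproxJumpAt u x a b ν}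

open Classical in
/-- The pair of one-sided traces `(u⁺(x), u⁻(x))` at a jump point (an arbitrary value
elsewhere); it is unique up to a swap, at every jump point. -/
def jumpVals (u : Euc n → F) (x : Euc n) : F × F :=
  if h : ∃ p : F × F, ∃ ν, ApproxJumpAt u x p.1 p.2 ν then h.choose else 0

/-- The jump opening `|u⁺(x) − u⁻(x)|` (well defined on `S_u`). -/
def jumpGap (u : Euc n → F) (x : Euc n) : ℝ :=
  ‖(jumpVals u x).1 - (jumpVals u x).2‖

/-- `S^σ_u := {x ∈ S_u : |u⁺(x) − u⁻(x)| ≥ σ}`. -/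
def jumpSetGE (σ : ℝ) (u : Euc n → F) : Set (Euc n) :=
  {x ∈ jumpSet u | σ ≤ jumpGap u x}

/-- `u` is approximately differentiable at `x` with approximate differential `L`. -/
def HasApproxDerivAt (u : Euc n → F) (L : Euc n →L[ℝ] F) (x : Euc n) : Prop :=
  ∀ ε > 0, DensityZeroAt {y | ε * ‖y - x‖ ≤ ‖u y - u x - L (y - x)‖} x

open Classical in
/-- The approximate differential `∇u(x)` (zero if it does not exist). -/
def approxDeriv (u : Euc n → F) (x : Euc n) : Euc n →L[ℝ] F :=
  if h : ∃ L, HasApproxDerivAt u L x then h.choose else 0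

/-- Frobenius (Euclidean) norm of a linear map `Euc n → F`. -/
def frobNorm (L : Euc n →L[ℝ] F) : ℝ :=
  Real.sqrt (∑ j, ‖L (EuclideanSpace.single j (1 : ℝ))‖ ^ 2)

/-- `|∇u|(x)`, the Euclidean norm of the approximate gradient. -/
def agradNorm (u : Euc n → F) (x : Euc n) : ℝ := frobNorm (approxDeriv u x)

/-- Admissible vector field for the sup-definition of the total variation on `Ω`. -/
def IsVarTest (Ω : Set (Euc n)) (Φ : Fin n → Euc n → F) : Prop :=
  (∀ j, ContDiff ℝ (⊤ : ℕ∞) (Φ j) ∧ HasCompactSupport (Φ j) ∧ tsupport (Φ j) ⊆ Ω) ∧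
  ∀ x, (∑ j, ‖Φ j x‖ ^ 2) ≤ 1

/-- The total variation `|Du|(Ω)` of `u` on the open set `Ω`. -/
def var (Ω : Set (Euc n)) (u : Euc n → F) : ℝ≥0∞ :=
  ⨆ (Φ : Fin n → Euc n → F) (_ : IsVarTest Ω Φ),
    ENNReal.ofReal
      (∫ x in Ω, ∑ j, ⟪u x, fderiv ℝ (Φ j) x (EuclideanSpace.single j (1 : ℝ))⟫)

/-- `u ∈ BV(Ω; F)`. -/
def BVOn (Ω : Set (Euc n)) (u : Euc n → F) : Prop :=
  IntegrableOn u Ω ∧ var Ω u < ⊤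

/-- `u ∈ BV_loc(Ω; F)`. -/
def BVlocOn (Ω : Set (Euc n)) (u : Euc n → F) : Prop :=
  ∀ x ∈ Ω, ∃ r > 0, ball x r ⊆ Ω ∧ IntegrableOn u (ball x r) ∧ var (ball x r) u < ⊤

/-- The total variation of the jump part, `∫_{S_u ∩ Ω} |u⁺ − u⁻| dH^{n-1}`. -/
def jumpVar (Ω : Set (Euc n)) (u : Euc n → F) : ℝ≥0∞ :=
  ∫⁻ x in jumpSet u ∩ Ω, ENNReal.ofReal (jumpGap u x) ∂(μH[(n : ℝ) - 1])

/-- The total variation of the Cantor part, `|D^c u|(Ω)`; for a `BV` function this equals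
`|Du|(Ω) − ∫_Ω |∇u| dx − ∫_{S_u} |u⁺ − u⁻| dH^{n-1}` by the `BV` decomposition. -/
def cantorVar (Ω : Set (Euc n)) (u : Euc n → F) : ℝ≥0∞ :=
  var Ω u - (∫⁻ x in Ω, ENNReal.ofReal (agradNorm u x)) - jumpVar Ω u

/-- Convergence `u_k → u` in `L¹(Ω; F)`. -/
def L1conv (Ω : Set (Euc n)) (uk : ℕ → Euc n → F) (u : Euc n → F) : Prop :=
  Tendsto (fun k => ∫⁻ x in Ω, (‖uk k x - u x‖₊ : ℝ≥0∞)) atTop (𝓝 0)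

/-- Weak-* convergence `u_k ⇀* u` in `BV(Ω; F)`: equivalently (Ambrosio–Fusco–Pallara,
Prop. 3.13), `L¹(Ω)` convergence together with equiboundedness of total variations. -/
def BVWeakStarConv (Ω : Set (Euc n)) (uk : ℕ → Euc n → F) (u : Euc n → F) : Prop :=
  L1conv Ω uk u ∧ (⨆ k, var Ω (uk k)) < ⊤

/-- `G` is the weak (distributional) differential of `u` on `Ω`. -/
def IsWeakDeriv (Ω : Set (Euc n)) (u : Euc n → F) (G : Euc n → Euc n →L[ℝ] F) : Prop :=
  ∀ (j : Fin n) (ϕ : Euc n → ℝ), ContDiff ℝ (⊤ : ℕ∞) ϕ → HasCompactSupport ϕ →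
    tsupport ϕ ⊆ Ω →
    ∫ x in Ω, (fderiv ℝ ϕ x (EuclideanSpace.single j (1 : ℝ))) • u x
      = - ∫ x in Ω, ϕ x • G x (EuclideanSpace.single j (1 : ℝ))

/-- `u ∈ W^{1,p}(Ω; F)`. -/
def MemW1p (p : ℝ≥0∞) (Ω : Set (Euc n)) (u : Euc n → F) : Prop :=
  IntegrableOn u Ω ∧ ∃ G : Euc n → Euc n →L[ℝ] F,
    AEStronglyMeasurable G (volume.restrict Ω) ∧ IsWeakDeriv Ω u G ∧
    MemLp (fun x => frobNorm (G x)) p (volume.restrict Ω)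

end Vec

/-- The perimeter of `E` in `Ω`. -/
def perimeter (Ω E : Set (Euc n)) : ℝ≥0∞ := var Ω (E.indicator (fun _ => (1 : ℝ)))

/-- `E` is a set of finite perimeter in `Ω`. -/
def FinitePerimeterIn (Ω E : Set (Euc n)) : Prop :=
  MeasurableSet E ∧ perimeter Ω E < ⊤

/-- `{E i}` is a Caccioppoli partition of `Ω`. -/
def IsCaccPartition (Ω : Set (Euc n)) (E : ℕ → Set (Euc n)) : Prop :=
  (∀ i, E i ⊆ Ω) ∧ (∀ i, MeasurableSet (E i)) ∧
  Pairwise (Function.onFun Disjoint E) ∧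
  volume (Ω \ ⋃ i, E i) = 0 ∧ (∑' i, perimeter Ω (E i)) < ⊤

/-- The point `e^{iθ}` of `S¹ ⊂ ℝ² ≅ ℂ`. -/
def expS1 (θ : ℝ) : Euc 2 :=
  (EuclideanSpace.equiv (Fin 2) ℝ).symm ![Real.cos θ, Real.sin θ]

/-- `φ` is a lifting of `u` on the set `B`, i.e. `u = e^{iφ}` a.e. on `B`. -/
def IsLiftingOn (B : Set (Euc n)) (u : Euc n → Euc 2) (φ : Euc n → ℝ) : Prop :=
  ∀ᵐ x ∂(volume.restrict B), u x = expS1 (φ x)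

/-- `u ∈ BV(Ω; S¹)`. -/
def MemBVS1 (Ω : Set (Euc n)) (u : Euc n → Euc 2) : Prop :=
  BVOn Ω u ∧ ∀ᵐ x ∂(volume.restrict Ω), ‖u x‖ = 1

/-- `φ ∈ GBV(Ω)`: all truncations `(φ ∧ M) ∨ (−M)` belong to `BV_loc(Ω)`. -/
def GBV (Ω : Set (Euc n)) (φ : Euc n → ℝ) : Prop :=
  Measurable φ ∧ ∀ M > 0, BVlocOn Ω (fun x => max (min (φ x) M) (-M))

/-- `(φ_k)` converges locally modulo `2π` to `φ_∞` in `Ω`. -/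
def ConvLocMod2pi (Ω : Set (Euc n)) (φk : ℕ → Euc n → ℝ) (φinf : Euc n → ℝ) : Prop :=
  ∃ E : ℕ → Set (Euc n), IsCaccPartition Ω E ∧
    ∃ d : ℕ → ℕ → ℤ,
      ∀ i, (∀ᵐ x ∂(volume.restrict (E i)),
              Tendsto (fun k => φk k x - 2 * Real.pi * d i k) atTop (𝓝 (φinf x))) ∧
           (∀ᵐ x ∂(volume.restrict (Ω \ E i)),
              Tendsto (fun k => |φk k x - 2 * Real.pi * d i k|) atTop atTop)

/-- `Ω` has Lipschitz boundary: near each boundary point, `Ω` is the open epigraph of a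
Lipschitz function over some hyperplane. -/
def HasLipschitzBoundary (Ω : Set (Euc n)) : Prop :=
  ∀ x ∈ frontier Ω, ∃ (ν : Euc n) (r : ℝ) (L : ℝ≥0) (ψ : Euc n → ℝ),
    ‖ν‖ = 1 ∧ 0 < r ∧ LipschitzWith L ψ ∧
    ∀ y ∈ ball x r, (y ∈ Ω ↔ ψ (y - ⟪y, ν⟫ • ν) < ⟪y, ν⟫)

/-- Hypothesis (a) on `ψ`. -/
def PsiHyp (ψ : ℝ → ℝ) : Prop :=
  MonotoneOn ψ (Icc 0 1) ∧ LowerSemicontinuousOn ψ (Icc 0 1) ∧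
  (∀ t ∈ Icc (0 : ℝ) 1, ψ t ∈ Icc (0 : ℝ) 1) ∧ ψ 0 = 0 ∧ ψ 1 = 1 ∧
  ∀ t ∈ Icc (0 : ℝ) 1, t ≠ 0 → 0 < ψ t

/-- Hypothesis (b) on `f`. -/
def FHyp (f : ℝ → ℝ) : Prop :=
  ConvexOn ℝ (Ici 0) f ∧ MonotoneOn f (Ici 0) ∧ (∀ t ∈ Ici (0 : ℝ), 0 ≤ f t) ∧
  Tendsto (fun t => f t / t) atTop (𝓝 1)

/-- Hypothesis (c) on `W`. -/
def WHyp (W : ℝ → ℝ) : Prop :=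
  ContinuousOn W (Icc 0 1) ∧ (∀ s ∈ Icc (0 : ℝ) 1, 0 ≤ W s) ∧
  ∀ s ∈ Icc (0 : ℝ) 1, (W s = 0 ↔ s = 1)

/-- `c_W(t) := 2 ∫_t^1 √(W(s)) ds`. -/
def cW (W : ℝ → ℝ) (t : ℝ) : ℝ := 2 * ∫ s in t..(1 : ℝ), Real.sqrt (W s)

/-- `g(z) := min { ψ(t) z + 2 c_W(t) : 0 ≤ t ≤ 1 }`. -/
def gfun (ψ W : ℝ → ℝ) (z : ℝ) : ℝ :=
  sInf ((fun t => ψ t * z + 2 * cW W t) '' Icc 0 1)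

/-- The jump energy `∫_{S_φ ∩ Ω} g(|φ⁺ − φ⁻|) dH^{n-1}`. -/
def jumpEnergy {F : Type*} [NormedAddCommGroup F] [InnerProductSpace ℝ F]
    (g : ℝ → ℝ) (Ω : Set (Euc n)) (φ : Euc n → F) : ℝ≥0∞ :=
  ∫⁻ x in jumpSet φ ∩ Ω, ENNReal.ofReal (g (jumpGap φ x)) ∂(μH[(n : ℝ) - 1])

/-- `m_g[u] := inf { ∫_{S_φ} g(|φ⁺ − φ⁻|) dH^{n-1} : φ ∈ GBV(Ω), e^{iφ} = u a.e. }`. -/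
def mg (g : ℝ → ℝ) (Ω : Set (Euc n)) (u : Euc n → Euc 2) : ℝ≥0∞ :=
  ⨅ (φ : Euc n → ℝ) (_ : GBV Ω φ ∧ IsLiftingOn Ω u φ), jumpEnergy g Ω φ

/-- The Ambrosio–Tortorelli-type energy `F_ε(u,v)`. -/
def ATEnergy (ψ f W : ℝ → ℝ) (ε : ℝ) (Ω : Set (Euc n)) (u : Euc n → Euc 2)
    (v : Euc n → ℝ) : ℝ≥0∞ :=
  ∫⁻ x in Ω, (ENNReal.ofReal (ψ (v x) * f (agradNorm u x)) +
    ENNReal.ofReal (ε * (agradNorm v x) ^ 2) + ENNReal.ofReal (W (v x) / ε))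

-- marker
/-- `(u,v) ∈ D̂_{S¹} = W^{1,1}(Ω;S¹) × W^{1,2}(Ω)`, `0 ≤ v ≤ 1`. -/
def InDomainHat (Ω : Set (Euc n)) (u : Euc n → Euc 2) (v : Euc n → ℝ) : Prop :=
  MemW1p 1 Ω u ∧ (∀ᵐ x ∂(volume.restrict Ω), ‖u x‖ = 1) ∧
  MemW1p 2 Ω v ∧ (∀ᵐ x ∂(volume.restrict Ω), v x ∈ Icc (0 : ℝ) 1)

/-- `(u,v) ∈ D_{S¹} = W^{1,2}(Ω;S¹) × W^{1,2}(Ω)`, `0 ≤ v ≤ 1`. -/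
def InDomain (Ω : Set (Euc n)) (u : Euc n → Euc 2) (v : Euc n → ℝ) : Prop :=
  MemW1p 2 Ω u ∧ (∀ᵐ x ∂(volume.restrict Ω), ‖u x‖ = 1) ∧
  MemW1p 2 Ω v ∧ (∀ᵐ x ∂(volume.restrict Ω), v x ∈ Icc (0 : ℝ) 1)

open Classical in
/-- The functional `F̂_ε^{S¹}`. -/
def FhatS1 (ψ f W : ℝ → ℝ) (ε : ℝ) (Ω : Set (Euc n)) (u : Euc n → Euc 2)
    (v : Euc n → ℝ) : ℝ≥0∞ :=
  if InDomainHat Ω u v then ATEnergy ψ f W ε Ω u v else ⊤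

open Classical in
/-- The functional `F_ε^{S¹}`. -/
def FS1 (ψ f W : ℝ → ℝ) (ε : ℝ) (Ω : Set (Euc n)) (u : Euc n → Euc 2)
    (v : Euc n → ℝ) : ℝ≥0∞ :=
  if InDomain Ω u v then ATEnergy ψ f W ε Ω u v else ⊤

open Classical in
/-- The local limit functional `F^{S¹}`. -/
def FlimS1 (f g : ℝ → ℝ) (Ω : Set (Euc n)) (u : Euc n → Euc 2) (v : Euc n → ℝ) : ℝ≥0∞ :=
  if MemBVS1 Ω u ∧ (∀ᵐ x ∂(volume.restrict Ω), v x = 1) then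
    (∫⁻ x in Ω, ENNReal.ofReal (f (agradNorm u x))) + cantorVar Ω u + jumpEnergy g Ω u
  else ⊤

open Classical in
/-- The nonlocal limit functional `F_lift`. -/
def Flift (f g : ℝ → ℝ) (Ω : Set (Euc n)) (u : Euc n → Euc 2) (v : Euc n → ℝ) : ℝ≥0∞ :=
  if MemBVS1 Ω u ∧ (∀ᵐ x ∂(volume.restrict Ω), v x = 1) then
    (∫⁻ x in Ω, ENNReal.ofReal (f (agradNorm u x))) + cantorVar Ω u + mg g Ω u
  else ⊤

/-- Membership in `L¹(Ω; S¹)`. -/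
def MemL1S1 (Ω : Set (Euc n)) (u : Euc n → Euc 2) : Prop :=
  IntegrableOn u Ω ∧ ∀ᵐ x ∂(volume.restrict Ω), ‖u x‖ = 1

/-- Γ-convergence, as `ε → 0⁺`, in the `L¹(Ω;S¹) × L¹(Ω)` topology: the liminf
inequality plus the existence of a recovery sequence, along every sequence `ε_k → 0⁺`. -/
def GammaConvL1 (Ω : Set (Euc n)) (Fε : ℝ → (Euc n → Euc 2) → (Euc n → ℝ) → ℝ≥0∞)
    (Flim : (Euc n → Euc 2) → (Euc n → ℝ) → ℝ≥0∞) : Prop :=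
  ∀ ε : ℕ → ℝ, (∀ k, 0 < ε k) → Tendsto ε atTop (𝓝 0) →
    (∀ (u : Euc n → Euc 2) (v : Euc n → ℝ) (uk : ℕ → Euc n → Euc 2) (vk : ℕ → Euc n → ℝ),
      MemL1S1 Ω u → (∀ k, MemL1S1 Ω (uk k)) →
      IntegrableOn v Ω → (∀ k, IntegrableOn (vk k) Ω) →
      L1conv Ω uk u → L1conv Ω vk v →
      Flim u v ≤ Filter.liminf (fun k => Fε (ε k) (uk k) (vk k)) atTop) ∧
    (∀ (u : Euc n → Euc 2) (v : Euc n → ℝ), MemL1S1 Ω u → IntegrableOn v Ω →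
      ∃ (uk : ℕ → Euc n → Euc 2) (vk : ℕ → Euc n → ℝ),
        (∀ k, MemL1S1 Ω (uk k)) ∧ (∀ k, IntegrableOn (vk k) Ω) ∧
        L1conv Ω uk u ∧ L1conv Ω vk v ∧
        Filter.limsup (fun k => Fε (ε k) (uk k) (vk k)) atTop ≤ Flim u v)

/-! Taking `t = 1` gives `g(z) ≤ ψ(1) z + 2 c_W(1) = z`. Conversely, by lower semicontinuity
of `ψ` at `1` there is `t₀ < 1` with `ψ(t₀)` as close to `1` as we like, and `c_W(t₀) > 0`
because `W > 0` on `[0, 1)`. For `z ≤ 2 c_W(t₀)` every competitor then costs at least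
`ψ(t₀) z`: if `t ≥ t₀` because `ψ` is increasing, and if `t ≤ t₀` because `c_W` is
decreasing, so `2 c_W(t) ≥ 2 c_W(t₀) ≥ z`. -/

lemma exists_mem_Ico_lt_of_lowerSemicontinuousOn {f : ℝ → ℝ} {a b y : ℝ}
    (hf : LowerSemicontinuousOn f (Icc a b)) (hab : a < b) (hy : y < f b) :
    ∃ t ∈ Ico a b, y < f t := by
  have : (𝓝[Ico a b] b).NeBot := by
    rw [← mem_closure_iff_nhdsWithin_neBot, closure_Ico hab.ne]
    exact right_mem_Icc.2 hab.le
  have hlt : ∀ᶠ t in 𝓝[Ico a b] b, y < f t :=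
    nhdsWithin_mono b Ico_subset_Icc_self (hf b (right_mem_Icc.2 hab.le) y hy)
  obtain ⟨t, hyt, ht⟩ := (hlt.and self_mem_nhdsWithin).exists
  exact ⟨t, ht, hyt⟩

section cW

variable {W : ℝ → ℝ}

lemma cW_one : cW W 1 = 0 := by
  simp [cW]

lemma cW_nonneg {t : ℝ} (ht : t ≤ 1) : 0 ≤ cW W t :=
  mul_nonneg zero_le_two (intervalIntegral.integral_nonneg ht fun _ _ => Real.sqrt_nonneg _)

lemma intervalIntegrable_sqrt (hW : ContinuousOn W (Icc 0 1)) {a b : ℝ} (ha : 0 ≤ a)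
    (hab : a ≤ b) (hb : b ≤ 1) : IntervalIntegrable (fun s => √(W s)) volume a b :=
  (hW.sqrt.mono (Icc_subset_Icc ha hb)).intervalIntegrable_of_Icc hab

lemma cW_antitoneOn (hW : ContinuousOn W (Icc 0 1)) : AntitoneOn (cW W) (Icc 0 1) := by
  intro a ha b hb hab
  have hsplit := intervalIntegral.integral_add_adjacent_intervals
    (intervalIntegrable_sqrt hW ha.1 hab hb.2) (intervalIntegrable_sqrt hW hb.1 hb.2 le_rfl)
  have hab_nonneg : 0 ≤ ∫ s in a..b, √(W s) :=
    intervalIntegral.integral_nonneg hab fun _ _ => Real.sqrt_nonneg _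
  unfold cW
  linarith

lemma cW_pos (hW : WHyp W) {t : ℝ} (ht : t ∈ Ico 0 1) : 0 < cW W t := by
  have hWpos : ∀ s ∈ Ioo t 1, 0 < √(W s) := by
    intro s hs
    have hs01 : s ∈ Icc (0 : ℝ) 1 := ⟨ht.1.trans hs.1.le, hs.2.le⟩
    exact Real.sqrt_pos.2 <| (hW.2.1 s hs01).lt_of_ne fun h =>
      hs.2.ne ((hW.2.2 s hs01).1 h.symm)
  exact mul_pos zero_lt_two <| intervalIntegral.intervalIntegral_pos_of_pos_on
    (intervalIntegrable_sqrt hW.1 ht.1 ht.2.le le_rfl) hWpos ht.2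

end cW

section gfun

variable {ψ W : ℝ → ℝ}

lemma gfun_le (hψ : PsiHyp ψ) {z t : ℝ} (hz : 0 ≤ z) (ht : t ∈ Icc 0 1) :
    gfun ψ W z ≤ ψ t * z + 2 * cW W t := by
  refine csInf_le ⟨0, ?_⟩ (mem_image_of_mem _ ht)
  rintro _ ⟨s, hs, rfl⟩
  have := mul_nonneg (hψ.2.2.1 s hs).1 hz
  have := cW_nonneg (W := W) hs.2
  dsimp only
  linarith

lemma gfun_le_self (hψ : PsiHyp ψ) {z : ℝ} (hz : 0 ≤ z) : gfun ψ W z ≤ z := by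
  simpa [hψ.2.2.2.2.1, cW_one] using gfun_le (W := W) hψ hz (right_mem_Icc.2 zero_le_one)

lemma mul_le_gfun (hψ : PsiHyp ψ) (hW : ContinuousOn W (Icc 0 1)) {t₀ z : ℝ}
    (ht₀ : t₀ ∈ Icc 0 1) (hz : 0 ≤ z) (hzt₀ : z ≤ 2 * cW W t₀) :
    ψ t₀ * z ≤ gfun ψ W z := by
  refine le_csInf ((nonempty_Icc.2 zero_le_one).image _) ?_
  rintro _ ⟨t, ht, rfl⟩
  dsimp only
  have hψt := (hψ.2.2.1 t ht).1
  rcases le_total t t₀ with htt₀ | ht₀t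
  · have := cW_antitoneOn hW ht ht₀ htt₀
    have := mul_le_of_le_one_left hz (hψ.2.2.1 t₀ ht₀).2
    nlinarith
  · have := mul_le_mul_of_nonneg_right (hψ.1 ht₀ ht ht₀t) hz
    have := cW_nonneg (W := W) ht.2
    linarith

end gfun

/-- `g(z) ≤ z` for all `z ≥ 0`, and `lim_{z→0⁺} g(z)/z = 1`. -/
theorem g_le_id_and_slope_one (ψ W : ℝ → ℝ) (hψ : PsiHyp ψ) (hW : WHyp W) :
    (∀ z ∈ Set.Ici (0 : ℝ), gfun ψ W z ≤ z) ∧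
    Tendsto (fun z => gfun ψ W z / z) (𝓝[>] 0) (𝓝 1) := by
  refine ⟨fun z hz => gfun_le_self hψ hz, tendsto_order.2 ⟨fun a ha => ?_, fun b hb => ?_⟩⟩
  · obtain ⟨t₀, ht₀, hat₀⟩ := exists_mem_Ico_lt_of_lowerSemicontinuousOn hψ.2.1 zero_lt_one
      (by rwa [hψ.2.2.2.2.1])
    have hδ : 0 < 2 * cW W t₀ := mul_pos zero_lt_two (cW_pos hW ht₀)
    filter_upwards [Ioo_mem_nhdsGT hδ] with z hz
    exact hat₀.trans_le <| (le_div_iff₀ hz.1).2 <|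
      mul_le_gfun hψ hW.1 (Ico_subset_Icc_self ht₀) hz.1.le hz.2.le
  · filter_upwards [self_mem_nhdsWithin] with z (hz : 0 < z)
    exact ((div_le_one hz).2 (gfun_le_self hψ hz.le)).trans_lt hb

end
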